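/- Let y, ξ ∈ L²(Ω) be nonnegative a.e. on a set Ω of finite measure, with y(x)/(y(x)+α) + ξ(x)/(ξ(x)+α) ≤ 1 a.e. Then the integral ⟨y, ξ⟩ = ∫_Ω y·ξ dx satisfies 0 ≤ ⟨y, ξ⟩ ≤ α²·|Ω|, where |Ω| is the measure of Ω. -/

import Mathlib

open MeasureTheory

/-- Clearing denominators, `a/(a+α) + b/(b+α) - 1 = (a*b - α^2) / ((a+α)(b+α))`. -/
theorem mul_le_sq_of_div_add_div_le_one {a b α : ℝ} (hα : 0 < α) (ha : 0 ≤ a) (hb : 0 ≤ b)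
    (h : a / (a + α) + b / (b + α) ≤ 1) : a * b ≤ α ^ 2 := by
  have hpos : 0 < (a + α) * (b + α) := by positivity
  rw [div_add_div _ _ (by positivity) (by positivity), div_le_one hpos] at h
  nlinarith

theorem stmt_10_general {X : Type*} [MeasurableSpace X] (μ : Measure X) [IsFiniteMeasure μ]
    (α : ℝ) (hα : 0 < α) (y ξ : X → ℝ)
    (hy : ∀ᵐ x ∂μ, 0 ≤ y x) (hξ : ∀ᵐ x ∂μ, 0 ≤ ξ x)
    (hrel : ∀ᵐ x ∂μ, y x / (y x + α) + ξ x / (ξ x + α) ≤ 1) :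
    0 ≤ ∫ x, y x * ξ x ∂μ ∧ (∫ x, y x * ξ x ∂μ) ≤ α ^ 2 * (μ Set.univ).toReal := by
  have hnonneg : ∀ᵐ x ∂μ, 0 ≤ y x * ξ x := by
    filter_upwards [hy, hξ] with x hyx hξx using mul_nonneg hyx hξx
  have hbound : ∀ᵐ x ∂μ, y x * ξ x ≤ α ^ 2 := by
    filter_upwards [hy, hξ, hrel] with x hyx hξx hrelx
    exact mul_le_sq_of_div_add_div_le_one hα hyx hξx hrelx
  refine ⟨integral_nonneg_of_ae hnonneg, ?_⟩
  calc ∫ x, y x * ξ x ∂μ ≤ ∫ _, α ^ 2 ∂μ :=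
        integral_mono_of_nonneg hnonneg (integrable_const _) hbound
    _ = α ^ 2 * (μ Set.univ).toReal := by rw [integral_const, smul_eq_mul, mul_comm, Measure.real]

theorem stmt_10 {X : Type*} [MeasurableSpace X] (μ : Measure X) [IsFiniteMeasure μ]
    (α : ℝ) (hα : 0 < α) (y ξ : X → ℝ)
    (hy : ∀ᵐ x ∂μ, 0 ≤ y x) (hξ : ∀ᵐ x ∂μ, 0 ≤ ξ x)
    (hrel : ∀ᵐ x ∂μ, y x / (y x + α) + ξ x / (ξ x + α) ≤ 1)
    (hint : Integrable (fun x => y x * ξ x) μ) :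
    0 ≤ ∫ x, y x * ξ x ∂μ ∧ (∫ x, y x * ξ x ∂μ) ≤ α ^ 2 * (μ Set.univ).toReal :=
  stmt_10_general μ α hα y ξ hy hξ hrel
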